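/- arXiv:0711.4648 — 3 statements merged into one kernel-verified Lean document; each statement's English description precedes it below -/
import Mathlib

section
/- Every compact subgroup of GL(n, ℂ) is conjugate to a subgroup of the unitary group U(n). -/
open MeasureTheory Matrix Complex
open scoped ComplexOrder MatrixOrder

/-- Every compact subgroup of `GL(n, ℂ)` is conjugate to a subgroup of the unitary group. -/
theorem compact_subgroup_conj_unitary
    (n : ℕ) (G : Subgroup (GL (Fin n) ℂ))
    (hGc : IsCompact (G : Set (GL (Fin n) ℂ))) :
    ∃ P : GL (Fin n) ℂ, ∀ g ∈ G,
      ((P * g * P⁻¹ : GL (Fin n) ℂ) : Matrix (Fin n) (Fin n) ℂ) ∈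
        Matrix.unitaryGroup (Fin n) ℂ := by
  haveI : CompactSpace ↥G := isCompact_iff_compactSpace.mp hGc
  borelize ↥G
  set μ : Measure ↥G := Measure.haar with hμdef
  haveI : IsFiniteMeasure μ := CompactSpace.isFiniteMeasure
  -- the coercion from `↥G` to matrices
  set ι : ↥G → Matrix (Fin n) (Fin n) ℂ :=
    fun g => ((g : GL (Fin n) ℂ) : Matrix (Fin n) (Fin n) ℂ) with hι
  have hιcont : Continuous ι := Units.continuous_val.comp continuous_subtype_val
  have hιmul : ∀ g h : ↥G, ι (g * h) = ι g * ι h := fun g h => rfl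
  have hιone : ι 1 = 1 := rfl
  -- the matrix-valued integrand
  set F : ↥G → Matrix (Fin n) (Fin n) ℂ := fun g => (ι g⁻¹)ᴴ * ι g⁻¹ with hF
  have hFcont : Continuous F := by
    have hinv : Continuous fun g : ↥G => ι g⁻¹ := hιcont.comp continuous_inv
    exact hinv.matrix_conjTranspose.matrix_mul hinv
  have hFint : ∀ i j, Integrable (fun g => F g i j) μ := fun i j =>
    (((continuous_apply j).comp ((continuous_apply i).comp hFcont))).integrable_of_hasCompactSupport
      (HasCompactSupport.of_compactSpace _)
  -- the averaged matrix
  set M : Matrix (Fin n) (Fin n) ℂ := of fun i j => ∫ g, F g i j ∂μ with hMdef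
  have hMapp : ∀ i j, M i j = ∫ g, F g i j ∂μ := fun i j => rfl
  -- sandwiching commutes with the integral
  have hsand : ∀ A B : Matrix (Fin n) (Fin n) ℂ,
      A * M * B = of fun i j => ∫ g, (A * F g * B) i j ∂μ := by
    intro A B
    ext i j
    have h1 : ∀ k l : Fin n, Integrable (fun g => A i k * F g k l) μ :=
      fun k l => (hFint k l).const_mul _
    have h2 : ∀ l, Integrable (fun g => (∑ k, A i k * F g k l) * B l j) μ :=
      fun l => (integrable_finset_sum _ fun k _ => h1 k l).mul_const _
    simp only [Matrix.mul_apply, of_apply, hMapp]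
    rw [integral_finset_sum _ fun l _ => h2 l]
    refine Finset.sum_congr rfl fun l _ => ?_
    rw [integral_mul_const, integral_finset_sum _ fun k _ => h1 k l]
    congr 1
    exact Finset.sum_congr rfl fun k _ => (integral_const_mul _ _).symm
  -- invariance of M under the group
  have hinvar : ∀ h : ↥G, (ι h)ᴴ * M * ι h = M := by
    intro h
    have key : ∀ g : ↥G, (ι h)ᴴ * F g * ι h = F (h⁻¹ * g) := by
      intro g
      simp only [hF, _root_.mul_inv_rev, inv_inv, hιmul, conjTranspose_mul, mul_assoc]
    rw [hsand]
    ext i j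
    simp only [of_apply]
    calc (∫ g, ((ι h)ᴴ * F g * ι h) i j ∂μ)
        = ∫ g, F (h⁻¹ * g) i j ∂μ := by simp_rw [key]
      _ = ∫ g, F g i j ∂μ := integral_mul_left_eq_self (fun g => F g i j) h⁻¹
      _ = M i j := rfl
  -- M is hermitian
  have hMherm : M.IsHermitian := by
    ext i j
    rw [conjTranspose_apply, hMapp, hMapp, Complex.star_def, ← integral_conj]
    refine integral_congr_ae (Filter.Eventually.of_forall fun g => ?_)
    have hFh : (F g).IsHermitian := Matrix.isHermitian_conjTranspose_mul_self _
    calc (starRingEnd ℂ) (F g j i) = (F g)ᴴ i j := (conjTranspose_apply _ _ _).symm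
      _ = F g i j := by rw [hFh]
  -- M is positive definite
  have hMpos : M.PosDef := by
    refine PosDef.of_dotProduct_mulVec_pos hMherm fun x hx => ?_
    set y : ↥G → Fin n → ℂ := fun g => ι g⁻¹ *ᵥ x with hy
    set ψ : ↥G → ℝ := fun g => ∑ k, normSq (y g k) with hψ
    have hswap : dotProduct (star x) (M *ᵥ x) = ∫ g, dotProduct (star x) (F g *ᵥ x) ∂μ := by
      have h1 : ∀ i j : Fin n, Integrable (fun g => F g i j * x j) μ :=
        fun i j => (hFint i j).mul_const _
      have h2 : ∀ i, Integrable (fun g => star x i * ∑ j, F g i j * x j) μ :=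
        fun i => ((integrable_finset_sum _ fun j _ => h1 i j)).const_mul _
      simp only [dotProduct, mulVec, hMapp]
      rw [integral_finset_sum _ fun i _ => h2 i]
      refine Finset.sum_congr rfl fun i _ => ?_
      rw [integral_const_mul, integral_finset_sum _ fun j _ => h1 i j]
      congr 1
      exact Finset.sum_congr rfl fun j _ => (integral_mul_const _ _).symm
    have hterm : ∀ g : ↥G, dotProduct (star x) (F g *ᵥ x) = ((ψ g : ℝ) : ℂ) := by
      intro g
      have : dotProduct (star x) (F g *ᵥ x) = dotProduct (star (y g)) (y g) := by
        rw [hF, ← mulVec_mulVec, dotProduct_mulVec, ← star_mulVec]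
      rw [this]
      simp only [hψ, dotProduct, Pi.star_apply, ofReal_sum]
      exact Finset.sum_congr rfl fun k _ => by
        rw [Complex.star_def, ← Complex.normSq_eq_conj_mul_self]
    have hxne : ∀ g : ↥G, y g ≠ 0 := by
      intro g hyg
      apply hx
      have : ι g *ᵥ y g = x := by
        rw [hy, mulVec_mulVec, ← hιmul, mul_inv_cancel, hιone, one_mulVec]
      rw [← this, hyg, mulVec_zero]
    have hψpos : ∀ g : ↥G, 0 < ψ g := by
      intro g
      obtain ⟨k, hk⟩ := Function.ne_iff.mp (hxne g)
      exact Finset.sum_pos' (fun k _ => normSq_nonneg _)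
        ⟨k, Finset.mem_univ k, normSq_pos.mpr (by simpa using hk)⟩
    have hψcont : Continuous ψ := by
      refine continuous_finset_sum _ fun k _ => Complex.continuous_normSq.comp ?_
      have : Continuous fun g : ↥G => ι g⁻¹ := hιcont.comp continuous_inv
      exact (continuous_apply k).comp (this.matrix_mulVec continuous_const)
    have hψint : Integrable ψ μ :=
      hψcont.integrable_of_hasCompactSupport (HasCompactSupport.of_compactSpace _)
    have hint : (0:ℝ) < ∫ g, ψ g ∂μ := by
      rw [integral_pos_iff_support_of_nonneg (fun g => (hψpos g).le) hψint]
      have : Function.support ψ = Set.univ :=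
        Set.eq_univ_of_forall fun g => (hψpos g).ne'
      rw [this]
      exact isOpen_univ.measure_pos μ ⟨1, trivial⟩
    rw [hswap]
    calc (0:ℂ) < ((∫ g, ψ g ∂μ : ℝ) : ℂ) := Complex.zero_lt_real.mpr hint
      _ = ∫ g, dotProduct (star x) (F g *ᵥ x) ∂μ := by
          rw [show ((∫ g, ψ g ∂μ : ℝ) : ℂ) = ∫ g, ((ψ g : ℝ) : ℂ) ∂μ from integral_ofReal.symm]
          exact integral_congr_ae (Filter.Eventually.of_forall fun g => (hterm g).symm)
  -- the square root of M
  set Q : Matrix (Fin n) (Fin n) ℂ := CFC.sqrt M with hQdef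
  have hQQ : Q * Q = M := CFC.sqrt_mul_sqrt_self M (Matrix.nonneg_iff_posSemidef.mpr hMpos.posSemidef)
  have hQherm : Qᴴ = Q := (Matrix.nonneg_iff_posSemidef.mp (CFC.sqrt_nonneg M)).1
  have hQdet : Q.det ≠ 0 := by
    intro h
    have : M.det = 0 := by rw [← hQQ, det_mul, h, mul_zero]
    exact hMpos.det_pos.ne' this
  have hQunit : IsUnit Q := (isUnit_iff_isUnit_det Q).2 hQdet.isUnit
  have hQinv : Q * Q⁻¹ = 1 := mul_nonsing_inv Q hQdet.isUnit
  have hQinv' : Q⁻¹ * Q = 1 := nonsing_inv_mul Q hQdet.isUnit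
  refine ⟨hQunit.unit, fun g hg => ?_⟩
  have hA : (ι ⟨g, hg⟩)ᴴ * M * ι ⟨g, hg⟩ = M := hinvar ⟨g, hg⟩
  rw [Matrix.mem_unitaryGroup_iff']
  have hco : ((hQunit.unit * g * hQunit.unit⁻¹ : GL (Fin n) ℂ) : Matrix (Fin n) (Fin n) ℂ)
      = Q * (g : Matrix (Fin n) (Fin n) ℂ) * Q⁻¹ := by
    rw [Units.val_mul, Units.val_mul, Matrix.coe_units_inv, hQunit.unit_spec]
  rw [hco, star_eq_conjTranspose]
  have hAg : ι ⟨g, hg⟩ = (g : Matrix (Fin n) (Fin n) ℂ) := rfl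
  calc (Q * ↑g * Q⁻¹)ᴴ * (Q * ↑g * Q⁻¹)
      = Q⁻¹ * ((↑g : Matrix (Fin n) (Fin n) ℂ)ᴴ * (Q * Q) * ↑g) * Q⁻¹ := by
        rw [conjTranspose_mul, conjTranspose_mul, conjTranspose_nonsing_inv, hQherm]
        simp only [Matrix.mul_assoc]
    _ = Q⁻¹ * M * Q⁻¹ := by rw [hQQ, ← hAg, hA]
    _ = 1 := by rw [← hQQ, ← Matrix.mul_assoc Q⁻¹ Q Q, hQinv', Matrix.one_mul, hQinv]
end

section
/- If a linear map of ℂⁿ of the form z_j ↦ λ_j z_{σ(j)} (λ_j ∈ ℂ*, σ a permutation) maps the spherical shell S_{r₁} = {r₁ < ‖z‖ < 1} bijectively onto S_{r₂} = {r₂ < ‖z‖ < 1}, then r₁ = r₂ and all |λ_j| = 1. -/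
/-- If `b * t < 1` for all `t` in `(r, 1)`, then `b ≤ 1`. -/
lemma shell_aux1 (r b : ℝ) (hb : 0 < b) (hr1 : r < 1)
    (h : ∀ t, r < t → t < 1 → b * t < 1) : b ≤ 1 := by
  by_contra h1
  push_neg at h1
  have hm : max r (1 / b) < 1 := by
    apply max_lt hr1
    rw [div_lt_one hb]; linarith
  have hle1 := le_max_left r (1 / b)
  have hle2 := le_max_right r (1 / b)
  have h1t : r < (max r (1 / b) + 1) / 2 := by linarith
  have h2t : (max r (1 / b) + 1) / 2 < 1 := by linarith
  have h3t : 1 / b < (max r (1 / b) + 1) / 2 := by linarith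
  have hlt := h _ h1t h2t
  have : 1 / b * b < (max r (1 / b) + 1) / 2 * b := mul_lt_mul_of_pos_right h3t hb
  rw [one_div_mul_cancel (ne_of_gt hb)] at this
  nlinarith

/-- If `s < b * t` for all `t` in `(r, 1)`, then `s ≤ b * r`. -/
lemma shell_aux2 (r s b : ℝ) (hb : 0 < b) (hr1 : r < 1)
    (h : ∀ t, r < t → t < 1 → s < b * t) : s ≤ b * r := by
  by_contra h1
  push_neg at h1
  have hrs : r < s / b := by rwa [lt_div_iff₀ hb, mul_comm]
  have hle1 := min_le_left ((r + s / b) / 2) ((r + 1) / 2)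
  have hle2 := min_le_right ((r + s / b) / 2) ((r + 1) / 2)
  have h1t : r < min ((r + s / b) / 2) ((r + 1) / 2) :=
    lt_min (by linarith) (by linarith)
  have h2t : min ((r + s / b) / 2) ((r + 1) / 2) < 1 := by linarith
  have h3t : min ((r + s / b) / 2) ((r + 1) / 2) < s / b := by linarith
  have hlt := h _ h1t h2t
  have : b * min ((r + s / b) / 2) ((r + 1) / 2) < b * (s / b) :=
    mul_lt_mul_of_pos_left h3t hb
  rw [mul_div_cancel₀ _ (ne_of_gt hb)] at this
  linarith

/-- If a linear map `z_j ↦ λ_j z_{σ(j)}` maps the spherical shell `S_{r₁}` bijectively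
onto `S_{r₂}`, then `r₁ = r₂` and all `|λ_j| = 1`. -/
theorem shell_linear_equiv_rigidity
    (n : ℕ) (hn : 0 < n) (r₁ r₂ : ℝ) (hr₁0 : 0 ≤ r₁) (hr₁1 : r₁ < 1)
    (hr₂0 : 0 ≤ r₂) (hr₂1 : r₂ < 1)
    (lam : Fin n → ℂ) (hlam : ∀ j, lam j ≠ 0) (σ : Equiv.Perm (Fin n))
    (hbij : Set.BijOn
      (fun z : EuclideanSpace ℂ (Fin n) => (WithLp.toLp 2 (fun j => lam j * z (σ j)) : EuclideanSpace ℂ (Fin n)))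
      {z : EuclideanSpace ℂ (Fin n) | r₁ < ‖z‖ ∧ ‖z‖ < 1}
      {z : EuclideanSpace ℂ (Fin n) | r₂ < ‖z‖ ∧ ‖z‖ < 1}) :
    r₁ = r₂ ∧ ∀ j, ‖lam j‖ = 1 := by
  have hapos : ∀ j, 0 < ‖lam j‖ := fun j =>
    norm_pos_iff.mpr (hlam j)
  -- forward: for t ∈ (r₁,1), r₂ < |λ_j| * t < 1
  have hfwd : ∀ j, ∀ t : ℝ, r₁ < t → t < 1 →
      r₂ < ‖lam j‖ * t ∧ ‖lam j‖ * t < 1 := by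
    intro j t h1 h2
    have ht0 : 0 ≤ t := le_trans hr₁0 (le_of_lt h1)
    have hznorm : ‖(EuclideanSpace.single (σ j) (t : ℂ) : EuclideanSpace ℂ (Fin n))‖ = t := by
      rw [EuclideanSpace.norm_single]
      simp [Complex.norm_real, abs_of_nonneg ht0]
    have hzmem : (EuclideanSpace.single (σ j) (t : ℂ) : EuclideanSpace ℂ (Fin n))
        ∈ {z : EuclideanSpace ℂ (Fin n) | r₁ < ‖z‖ ∧ ‖z‖ < 1} := by
      rw [Set.mem_setOf_eq, hznorm]; exact ⟨h1, h2⟩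
    have himg := hbij.mapsTo hzmem
    have heq : (WithLp.toLp 2 (fun i => lam i * (EuclideanSpace.single (σ j) (t : ℂ) :
          EuclideanSpace ℂ (Fin n)) (σ i)) : EuclideanSpace ℂ (Fin n))
        = EuclideanSpace.single j (lam j * t) := by
      ext i
      simp only [EuclideanSpace.single_apply]
      by_cases hij : i = j
      · subst hij; simp
      · have : σ i ≠ σ j := fun hc => hij (σ.injective hc)
        simp [this, hij]
    obtain ⟨hA, hB⟩ := himg
    rw [heq, EuclideanSpace.norm_single] at hA hB
    have hnm : ‖lam j * (t : ℂ)‖ = ‖lam j‖ * t := by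
      rw [norm_mul]
      simp [Complex.norm_real, abs_of_nonneg ht0]
    rw [hnm] at hA hB
    exact ⟨hA, hB⟩
  -- backward: for t ∈ (r₂,1), r₁ < (1/|λ_j|) * t < 1
  have hbwd : ∀ j, ∀ t : ℝ, r₂ < t → t < 1 →
      r₁ < (1 / ‖lam j‖) * t ∧ (1 / ‖lam j‖) * t < 1 := by
    intro j t h1 h2
    have ht0 : 0 ≤ t := le_trans hr₂0 (le_of_lt h1)
    have hwmem : (EuclideanSpace.single j (t : ℂ) : EuclideanSpace ℂ (Fin n))
        ∈ {z : EuclideanSpace ℂ (Fin n) | r₂ < ‖z‖ ∧ ‖z‖ < 1} := by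
      rw [Set.mem_setOf_eq, EuclideanSpace.norm_single]
      simp only [Complex.norm_real, Real.norm_eq_abs, abs_of_nonneg ht0]
      exact ⟨h1, h2⟩
    obtain ⟨z, hzmem, hzeq⟩ := hbij.surjOn hwmem
    have hzval : z = EuclideanSpace.single (σ j) ((t : ℂ) / lam j) := by
      ext k
      obtain ⟨i, rfl⟩ : ∃ i, σ i = k := ⟨σ.symm k, σ.apply_symm_apply k⟩
      have hk := congrArg (fun w : EuclideanSpace ℂ (Fin n) => w i) hzeq
      simp only [EuclideanSpace.single_apply] at hk
      simp only [EuclideanSpace.single_apply]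
      by_cases hij : i = j
      · subst hij
        rw [if_pos rfl] at hk
        rw [if_pos rfl, eq_div_iff (hlam i), mul_comm]
        exact hk
      · rw [if_neg hij] at hk
        rw [if_neg (fun hc => hij (σ.injective hc))]
        rcases mul_eq_zero.mp hk with h | h
        · exact absurd h (hlam i)
        · exact h
    rw [Set.mem_setOf_eq, hzval, EuclideanSpace.norm_single] at hzmem
    have hnm : ‖(t : ℂ) / lam j‖ = (1 / ‖lam j‖) * t := by
      rw [norm_div, Complex.norm_real, Real.norm_eq_abs, abs_of_nonneg ht0]
      ring
    rw [hnm] at hzmem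
    exact hzmem
  -- conclude |λ_j| = 1
  have habs : ∀ j, ‖lam j‖ = 1 := by
    intro j
    have h1 : ‖lam j‖ ≤ 1 := shell_aux1 r₁ _ (hapos j) hr₁1
      (fun t h1 h2 => (hfwd j t h1 h2).2)
    have h2 : 1 / ‖lam j‖ ≤ 1 := shell_aux1 r₂ _
      (one_div_pos.mpr (hapos j)) hr₂1 (fun t h1 h2 => (hbwd j t h1 h2).2)
    have h3 : 1 ≤ ‖lam j‖ := (div_le_one (hapos j)).mp h2
    linarith
  refine ⟨?_, habs⟩
  have h1 : r₂ ≤ ‖lam ⟨0, hn⟩‖ * r₁ := shell_aux2 r₁ r₂ _ (hapos _) hr₁1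
    (fun t h1 h2 => (hfwd ⟨0, hn⟩ t h1 h2).1)
  have h2 : r₁ ≤ (1 / ‖lam ⟨0, hn⟩‖) * r₂ := shell_aux2 r₂ r₁ _
    (one_div_pos.mpr (hapos _)) hr₂1 (fun t h1 h2 => (hbwd ⟨0, hn⟩ t h1 h2).1)
  rw [habs ⟨0, hn⟩] at h1 h2
  simp at h1 h2
  linarith
end

section
/- The automorphism group of the polydisc: Aut(Δⁿ) is generated by the diagonal actions of Aut(Δ)ⁿ together with permutations of the coordinates; in particular the connected identity component Aut(Δⁿ)⁰ is isomorphic to the direct product of n copies of Aut(Δ). -/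
open Metric Set Complex

section Helpers
variable {n : ℕ}

lemma pd_mem_iff {z : Fin n → ℂ} :
    z ∈ Metric.ball (0 : Fin n → ℂ) 1 ↔ ∀ j, ‖z j‖ < 1 := by
  rw [mem_ball_zero_iff]
  exact pi_norm_lt_iff one_pos

lemma pd_set_eq :
    {w : Fin n → ℂ | ∀ j, w j ∈ Metric.ball (0:ℂ) 1} = Metric.ball (0 : Fin n → ℂ) 1 := by
  ext w
  simp only [Set.mem_setOf_eq, mem_ball_zero_iff]
  exact (pi_norm_lt_iff one_pos).symm

end Helpers

noncomputable def pdMobius (a w : ℂ) : ℂ := (w - a) / (1 - (starRingEnd ℂ) a * w)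

lemma pdMobius_denom_ne {a w : ℂ} (ha : ‖a‖ < 1) (hw : ‖w‖ < 1) :
    1 - (starRingEnd ℂ) a * w ≠ 0 := by
  intro h
  have h1 : ‖(starRingEnd ℂ) a * w‖ < 1 := by
    rw [norm_mul, RCLike.norm_conj]
    nlinarith [norm_nonneg a, norm_nonneg w]
  have : (1 : ℂ) = (starRingEnd ℂ) a * w := by linear_combination h
  rw [← this] at h1
  simp at h1

lemma normSq_lt_one_of_norm {a : ℂ} (ha : ‖a‖ < 1) : Complex.normSq a < 1 := by
  have h : Complex.normSq a = ‖a‖ ^ 2 := by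
    rw [Complex.sq_norm]
  nlinarith [norm_nonneg a]

lemma pdMobius_mem {a w : ℂ} (ha : ‖a‖ < 1) (hw : ‖w‖ < 1) :
    ‖pdMobius a w‖ < 1 := by
  have hden := pdMobius_denom_ne ha hw
  have hsq : Complex.normSq (w - a) < Complex.normSq (1 - (starRingEnd ℂ) a * w) := by
    have key : Complex.normSq (1 - (starRingEnd ℂ) a * w) - Complex.normSq (w - a)
        = (1 - Complex.normSq a) * (1 - Complex.normSq w) := by
      simp only [Complex.normSq_apply, Complex.sub_re, Complex.sub_im, Complex.one_re,
        Complex.one_im, Complex.mul_re, Complex.mul_im, Complex.conj_re, Complex.conj_im]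
      ring
    nlinarith [normSq_lt_one_of_norm ha, normSq_lt_one_of_norm hw, Complex.normSq_nonneg a,
      Complex.normSq_nonneg w]
  rw [pdMobius, norm_div, div_lt_one (by simpa using hden : (0:ℝ) < ‖1 - (starRingEnd ℂ) a * w‖)]
  rw [show ‖w - a‖ = Real.sqrt (Complex.normSq (w - a)) by rw [Complex.norm_def],
    show ‖1 - (starRingEnd ℂ) a * w‖ = Real.sqrt (Complex.normSq (1 - (starRingEnd ℂ) a * w)) by
      rw [Complex.norm_def]]
  exact Real.sqrt_lt_sqrt (Complex.normSq_nonneg _) hsq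

lemma pdMobius_left_inv {a w : ℂ} (ha : ‖a‖ < 1) (hw : ‖w‖ < 1) :
    pdMobius (-a) (pdMobius a w) = w := by
  have h1 := pdMobius_denom_ne ha hw
  have h3 := pdMobius_denom_ne ha (by simpa using ha : ‖a‖ < 1)
  rw [pdMobius, pdMobius, map_neg]
  have hD : 1 - -(starRingEnd ℂ) a * ((w - a) / (1 - (starRingEnd ℂ) a * w))
      = (1 - (starRingEnd ℂ) a * a) / (1 - (starRingEnd ℂ) a * w) := by
    field_simp
    ring
  rw [hD]
  have hDne : (1 - (starRingEnd ℂ) a * a) / (1 - (starRingEnd ℂ) a * w) ≠ 0 :=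
    div_ne_zero h3 h1
  rw [div_eq_iff hDne]
  have h1' : 1 - w * (starRingEnd ℂ) a ≠ 0 := by rwa [mul_comm]
  field_simp
  ring

lemma pdMobius_diffOn {a : ℂ} (ha : ‖a‖ < 1) :
    DifferentiableOn ℂ (pdMobius a) (Metric.ball (0:ℂ) 1) := by
  apply DifferentiableOn.div
  · exact (differentiable_id.sub_const a).differentiableOn
  · exact ((differentiable_const _).mul differentiable_id).const_sub 1 |>.differentiableOn
  · intro w hw
    exact pdMobius_denom_ne ha (by simpa [mem_ball_zero_iff] using hw)

/-- Schwarz equality (derivative version). -/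
lemma schwarz_deriv_eq {h : ℂ → ℂ} (hd : DifferentiableOn ℂ h (Metric.ball 0 1))
    (hm : Set.MapsTo h (Metric.ball 0 1) (Metric.ball 0 1)) (h0 : h 0 = 0)
    (hder : ‖deriv h 0‖ = 1) :
    Set.EqOn h (fun z => deriv h 0 * z) (Metric.ball 0 1) := by
  have hm' : Set.MapsTo h (Metric.ball 0 1) (Metric.ball (h 0) 1) := by rwa [h0]
  have h_eq : ‖dslope h 0 0‖ = 1 / 1 := by rwa [dslope_same, div_one]
  intro z hz
  have := Complex.affine_of_mapsTo_ball_of_exists_norm_dslope_eq_div hd (hm'.mono_right ball_subset_closedBall)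
    (Metric.mem_ball_self one_pos) h_eq hz
  simpa [h0, dslope_same, mul_comm] using this

/-- Schwarz equality (point version). -/
lemma schwarz_point_eq {h : ℂ → ℂ} (hd : DifferentiableOn ℂ h (Metric.ball 0 1))
    (hm : Set.MapsTo h (Metric.ball 0 1) (Metric.ball 0 1)) (h0 : h 0 = 0)
    {z₀ : ℂ} (hz₀ : z₀ ∈ Metric.ball (0:ℂ) 1) (hne : z₀ ≠ 0) (heq : ‖h z₀‖ = ‖z₀‖) :
    ∃ c : ℂ, ‖c‖ = 1 ∧ Set.EqOn h (fun z => c * z) (Metric.ball 0 1) := by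
  have hm' : Set.MapsTo h (Metric.ball 0 1) (Metric.ball (h 0) 1) := by rwa [h0]
  have hds : dslope h 0 z₀ = z₀⁻¹ * h z₀ := by
    rw [dslope_of_ne _ hne, slope_def_field, h0, sub_zero, sub_zero, div_eq_inv_mul]
  have h_eq : ‖dslope h 0 z₀‖ = 1 / 1 := by
    rw [hds, norm_mul, norm_inv, heq, div_one, inv_mul_cancel₀ (by simpa using hne)]
  refine ⟨dslope h 0 z₀, by simpa using h_eq, fun z hz => ?_⟩
  have := Complex.affine_of_mapsTo_ball_of_exists_norm_dslope_eq_div hd (hm'.mono_right ball_subset_closedBall) hz₀ h_eq hz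
  simpa [h0, mul_comm] using this

/-- Several-variable Schwarz bound on the polydisc (= the unit ball of the sup norm). -/
lemma schwarz_polydisc {n : ℕ} {u : (Fin n → ℂ) → ℂ}
    (hu : DifferentiableOn ℂ u (Metric.ball 0 1))
    (hmaps : Set.MapsTo u (Metric.ball (0 : Fin n → ℂ) 1) (Metric.ball (0:ℂ) 1))
    (h0 : u 0 = 0) {z : Fin n → ℂ} (hz : z ∈ Metric.ball (0 : Fin n → ℂ) 1) :
    ‖u z‖ ≤ ‖z‖ := by
  rcases eq_or_ne z 0 with rfl | hzne
  · simp [h0]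
  have hr : (0:ℝ) < ‖z‖ := norm_pos_iff.mpr hzne
  set w : Fin n → ℂ := ((‖z‖ : ℂ))⁻¹ • z with hw
  have hwn : ‖w‖ = 1 := by
    rw [hw, norm_smul, norm_inv, Complex.norm_real, Real.norm_eq_abs, abs_of_pos hr,
      inv_mul_cancel₀ hr.ne']
  have hinner : ∀ lam : ℂ, lam ∈ Metric.ball (0:ℂ) 1 → lam • w ∈ Metric.ball (0 : Fin n → ℂ) 1 := by
    intro lam hlam
    rw [mem_ball_zero_iff, norm_smul, hwn, mul_one]
    exact mem_ball_zero_iff.mp hlam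
  set h : ℂ → ℂ := fun lam => u (lam • w) with hh
  have hhd : DifferentiableOn ℂ h (Metric.ball 0 1) := by
    apply hu.comp
    · exact (differentiable_id.smul_const w).differentiableOn
    · exact hinner
  have hhm : Set.MapsTo h (Metric.ball 0 1) (Metric.ball 0 1) := fun lam hlam =>
    hmaps (hinner lam hlam)
  have hh0 : h 0 = 0 := by simp [hh, h0]
  have hzball : ((‖z‖ : ℂ)) ∈ Metric.ball (0:ℂ) 1 := by
    rw [mem_ball_zero_iff, Complex.norm_real, Real.norm_eq_abs, abs_of_pos hr]
    exact mem_ball_zero_iff.mp hz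
  have habs : ‖((‖z‖:ℂ))‖ < 1 := by
    have := mem_ball_zero_iff.mp hzball
    simpa using this
  have hmain := Complex.norm_le_norm_of_mapsTo_ball hhd (hhm.mono_right ball_subset_closedBall) hh0 habs
  have hres : h (‖z‖ : ℂ) = u z := by
    have hne' : ((‖z‖:ℂ)) ≠ 0 := Complex.ofReal_ne_zero.mpr hr.ne'
    show u (((‖z‖:ℂ)) • ((‖z‖:ℂ))⁻¹ • z) = u z
    rw [smul_smul, mul_inv_cancel₀ hne', one_smul]
  calc ‖u z‖ = ‖h (‖z‖:ℂ)‖ := by rw [hres]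
    _ ≤ ‖((‖z‖:ℂ))‖ := hmain
    _ = ‖z‖ := by rw [Complex.norm_real, Real.norm_eq_abs, abs_of_pos hr]

/-- Structure of `Aut(Δⁿ)`: every holomorphic automorphism of the unit polydisc is the
composition of a permutation of the coordinates with a diagonal product of automorphisms
of the unit disc (hence `Aut(Δⁿ)` is generated by `Aut(Δ)ⁿ` and coordinate permutations,
and `Aut(Δⁿ)⁰ ≅ Aut(Δ)ⁿ`). -/
theorem polydisc_automorphism_structure
    (n : ℕ) (f : (Fin n → ℂ) → (Fin n → ℂ))
    (hf : DifferentiableOn ℂ f {w : Fin n → ℂ | ∀ j, w j ∈ Metric.ball (0 : ℂ) 1})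
    (hbij : Set.BijOn f {w : Fin n → ℂ | ∀ j, w j ∈ Metric.ball (0 : ℂ) 1}
      {w : Fin n → ℂ | ∀ j, w j ∈ Metric.ball (0 : ℂ) 1})
    (g : (Fin n → ℂ) → (Fin n → ℂ))
    (hg : DifferentiableOn ℂ g {w : Fin n → ℂ | ∀ j, w j ∈ Metric.ball (0 : ℂ) 1})
    (hinv : Set.InvOn g f {w : Fin n → ℂ | ∀ j, w j ∈ Metric.ball (0 : ℂ) 1}
      {w : Fin n → ℂ | ∀ j, w j ∈ Metric.ball (0 : ℂ) 1}) :
    ∃ (σ : Equiv.Perm (Fin n)) (φ : Fin n → ℂ → ℂ),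
      (∀ j : Fin n,
        DifferentiableOn ℂ (φ j) (Metric.ball (0 : ℂ) 1) ∧
        Set.BijOn (φ j) (Metric.ball (0 : ℂ) 1) (Metric.ball (0 : ℂ) 1) ∧
        ∃ ψ : ℂ → ℂ, DifferentiableOn ℂ ψ (Metric.ball (0 : ℂ) 1) ∧
          Set.InvOn ψ (φ j) (Metric.ball (0 : ℂ) 1) (Metric.ball (0 : ℂ) 1)) ∧
      ∀ z ∈ {w : Fin n → ℂ | ∀ j, w j ∈ Metric.ball (0 : ℂ) 1},
        f z = fun j => φ j (z (σ j)) := by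
  rw [pd_set_eq] at hf hbij hg hinv ⊢
  set Bn : Set (Fin n → ℂ) := Metric.ball 0 1 with hBn
  have h0B : (0 : Fin n → ℂ) ∈ Bn := mem_ball_self one_pos
  have haB : f 0 ∈ Bn := hbij.mapsTo h0B
  have haj : ∀ j, ‖f 0 j‖ < 1 := pd_mem_iff.mp haB
  -- coordinates of members
  have hco : ∀ {z : Fin n → ℂ}, z ∈ Bn → ∀ j, ‖z j‖ < 1 := fun hz => pd_mem_iff.mp hz
  have hco' : ∀ {z : Fin n → ℂ}, (∀ j, ‖z j‖ < 1) → z ∈ Bn := fun hz => pd_mem_iff.mpr hz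
  -- the normalized automorphism G with G 0 = 0
  set G : (Fin n → ℂ) → (Fin n → ℂ) := fun z j => pdMobius (f 0 j) (f z j) with hGdef
  have hGmapsj : ∀ z ∈ Bn, ∀ j, ‖G z j‖ < 1 := fun z hz j =>
    pdMobius_mem (haj j) (hco (hbij.mapsTo hz) j)
  have hGmaps : Set.MapsTo G Bn Bn := fun z hz => hco' (hGmapsj z hz)
  have hG0 : G 0 = 0 := by
    funext j
    simp [hGdef, pdMobius]
  have hfcoord : ∀ j, DifferentiableOn ℂ (fun z => f z j) Bn := fun j =>
    (ContinuousLinearMap.proj (R := ℂ) (φ := fun _ : Fin n => ℂ)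
      j).differentiable.comp_differentiableOn hf
  have hGdiffj : ∀ j, DifferentiableOn ℂ (fun z => G z j) Bn := by
    intro j
    exact (pdMobius_diffOn (haj j)).comp (hfcoord j)
      (fun z hz => mem_ball_zero_iff.mpr (hco (hbij.mapsTo hz) j))
  -- the inverse map
  have hgmaps : Set.MapsTo g Bn Bn := by
    intro w hw
    obtain ⟨z, hz, rfl⟩ := hbij.surjOn hw
    rw [hinv.1 hz]
    exact hz
  set M' : (Fin n → ℂ) → (Fin n → ℂ) := fun w j => pdMobius (-(f 0 j)) (w j) with hM'def
  have hM'maps : Set.MapsTo M' Bn Bn := fun w hw =>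
    hco' fun j => pdMobius_mem (by simpa using haj j) (hco hw j)
  set Ginv : (Fin n → ℂ) → (Fin n → ℂ) := fun w => g (M' w) with hGinvdef
  have hGinvmaps : Set.MapsTo Ginv Bn Bn := fun w hw => hgmaps (hM'maps hw)
  have hM'0 : M' 0 = f 0 := by
    funext j
    simp [hM'def, pdMobius]
  have hGinv0 : Ginv 0 = 0 := by
    rw [hGinvdef]
    simp only [hM'0]
    exact hinv.1 h0B
  have hGinvdiffj : ∀ j, DifferentiableOn ℂ (fun w => Ginv w j) Bn := by
    intro j
    have hM'diff : DifferentiableOn ℂ M' Bn := by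
      rw [hM'def]
      apply differentiableOn_pi.mpr
      intro i
      exact (pdMobius_diffOn (by simpa using haj i)).comp
        ((ContinuousLinearMap.proj (R := ℂ) (φ := fun _ : Fin n => ℂ)
          i).differentiable.differentiableOn)
        (fun w hw => mem_ball_zero_iff.mpr (hco hw i))
    exact ((ContinuousLinearMap.proj (R := ℂ) (φ := fun _ : Fin n => ℂ)
      j).differentiable.comp_differentiableOn (hg.comp hM'diff hM'maps))
  have hGinvG : ∀ z ∈ Bn, Ginv (G z) = z := by
    intro z hz
    have : M' (G z) = f z := by
      funext j
      exact pdMobius_left_inv (haj j) (hco (hbij.mapsTo hz) j)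
    rw [hGinvdef]
    simp only [this]
    exact hinv.1 hz
  -- Schwarz bounds
  have hGinvle : ∀ w ∈ Bn, ∀ j, ‖Ginv w j‖ ≤ ‖w‖ := by
    intro w hw j
    refine schwarz_polydisc (hGinvdiffj j)
      (fun v hv => mem_ball_zero_iff.mpr (hco (hGinvmaps hv) j)) ?_ hw
    rw [hGinv0]; rfl
  have hGnorm_ge : ∀ z ∈ Bn, ∀ k, ‖z k‖ ≤ ‖G z‖ := by
    intro z hz k
    have := hGinvle (G z) (hGmaps hz) k
    rwa [hGinvG z hz] at this
  -- membership of scaled vectors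
  have hsmul_mem : ∀ (w : Fin n → ℂ), (∀ j, ‖w j‖ ≤ 1) →
      ∀ lam ∈ Metric.ball (0:ℂ) 1, lam • w ∈ Bn := by
    intro w hw lam hlam
    refine hco' fun j => ?_
    have : ‖(lam • w) j‖ = ‖lam‖ * ‖w j‖ := by
      simp [Pi.smul_apply, smul_eq_mul]
    rw [this]
    calc ‖lam‖ * ‖w j‖ ≤ ‖lam‖ * 1 := by
          have := norm_nonneg lam
          nlinarith [hw j]
      _ < 1 := by simpa using mem_ball_zero_iff.mp hlam
  -- slices along directions
  have haxdiff : ∀ (w : Fin n → ℂ), (∀ j, ‖w j‖ ≤ 1) → ∀ j,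
      DifferentiableOn ℂ (fun lam : ℂ => G (lam • w) j) (Metric.ball 0 1) := by
    intro w hw j
    exact (hGdiffj j).comp ((differentiable_id.smul_const w).differentiableOn)
      (hsmul_mem w hw)
  have haxmaps : ∀ (w : Fin n → ℂ), (∀ j, ‖w j‖ ≤ 1) → ∀ j,
      Set.MapsTo (fun lam : ℂ => G (lam • w) j) (Metric.ball 0 1) (Metric.ball 0 1) := by
    intro w hw j lam hlam
    exact mem_ball_zero_iff.mpr (hGmapsj _ (hsmul_mem w hw lam hlam) j)
  have hax0 : ∀ (w : Fin n → ℂ) j, G ((0:ℂ) • w) j = 0 := by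
    intro w j
    rw [zero_smul, hG0]
    rfl
  -- derivative of slices
  have haxderiv : ∀ (w : Fin n → ℂ) (j : Fin n),
      HasDerivAt (fun lam : ℂ => G (lam • w) j) (fderiv ℂ (fun z => G z j) 0 w) 0 := by
    intro w j
    have hdat : DifferentiableAt ℂ (fun z => G z j) 0 :=
      (hGdiffj j).differentiableAt (isOpen_ball.mem_nhds h0B)
    have hinner : HasDerivAt (fun lam : ℂ => lam • w) w 0 := by
      have := (hasDerivAt_id (0:ℂ)).smul_const w
      simpa using this
    have h2 : HasFDerivAt (fun z => G z j) (fderiv ℂ (fun z => G z j) 0)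
        ((fun lam : ℂ => lam • w) 0) := by
      have : (fun lam : ℂ => lam • w) 0 = 0 := by simp
      rw [this]
      exact hdat.hasFDerivAt
    exact h2.comp_hasDerivAt 0 hinner
  -- existence of rotation coordinates along the axes
  have hsingle_le : ∀ k : Fin n, ∀ j, ‖(Pi.single k 1 : Fin n → ℂ) j‖ ≤ 1 := by
    intro k j
    rcases eq_or_ne j k with rfl | h
    · simp
    · simp [Pi.single_apply, h]
  have hnh : ‖((1:ℂ)/2)‖ = 1/2 := by
    rw [norm_div, norm_one]
    norm_num
  have hhalf_mem : ((1:ℂ)/2) ∈ Metric.ball (0:ℂ) 1 := by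
    rw [mem_ball_zero_iff, hnh]
    norm_num
  have hhalf_ne : ((1:ℂ)/2) ≠ 0 := by norm_num
  have hrot : ∀ k : Fin n, ∃ j : Fin n, ∃ c : ℂ, ‖c‖ = 1 ∧
      ∀ lam ∈ Metric.ball (0:ℂ) 1, G (lam • (Pi.single k 1 : Fin n → ℂ)) j = c * lam := by
    intro k
    have heB : ∀ j, ‖(Pi.single k 1 : Fin n → ℂ) j‖ ≤ 1 := hsingle_le k
    have hzB : ((1:ℂ)/2) • (Pi.single k 1 : Fin n → ℂ) ∈ Bn :=
      hsmul_mem _ heB _ hhalf_mem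
    have hhalf_le : ∀ j, ‖G (((1:ℂ)/2) • (Pi.single k 1 : Fin n → ℂ)) j‖ ≤ 1/2 := by
      intro j
      have h1 := Complex.norm_le_norm_of_mapsTo_ball (haxdiff _ heB j)
        ((haxmaps _ heB j).mono_right ball_subset_closedBall)
        (hax0 _ j) (show ‖(1:ℂ)/2‖ < 1 by
          rw [hnh]; norm_num)
      rw [hnh] at h1
      exact h1
    have hge : (1:ℝ)/2 ≤ ‖G (((1:ℂ)/2) • (Pi.single k 1 : Fin n → ℂ))‖ := by
      have h2 := hGnorm_ge _ hzB k
      have hzk : (((1:ℂ)/2) • (Pi.single k 1 : Fin n → ℂ)) k = 1/2 := by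
        simp
      rw [hzk, hnh] at h2
      exact h2
    have hex : ∃ j, 1/2 ≤ ‖G (((1:ℂ)/2) • (Pi.single k 1 : Fin n → ℂ)) j‖ := by
      by_contra hcon
      push_neg at hcon
      have : ‖G (((1:ℂ)/2) • (Pi.single k 1 : Fin n → ℂ))‖ < 1/2 :=
        (pi_norm_lt_iff (by norm_num)).mpr hcon
      linarith
    obtain ⟨j, hj⟩ := hex
    have heq : ‖(fun lam : ℂ => G (lam • (Pi.single k 1 : Fin n → ℂ)) j) ((1:ℂ)/2)‖
        = ‖((1:ℂ)/2)‖ := by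
      rw [hnh]
      exact le_antisymm (hhalf_le j) hj
    obtain ⟨c, hc1, hEq⟩ := schwarz_point_eq (haxdiff _ heB j) (haxmaps _ heB j)
      (hax0 _ j) hhalf_mem hhalf_ne heq
    exact ⟨j, c, hc1, fun lam hlam => hEq hlam⟩
  choose τ cc hcc1 hccEq using hrot
  -- derivative entries
  have hDentry : ∀ k, fderiv ℂ (fun z => G z (τ k)) 0 (Pi.single k 1) = cc k := by
    intro k
    have h1 := haxderiv (Pi.single k 1) (τ k)
    have h2 : HasDerivAt (fun lam : ℂ => cc k * lam)
        (fderiv ℂ (fun z => G z (τ k)) 0 (Pi.single k 1)) 0 := by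
      refine h1.congr_of_eventuallyEq ?_
      filter_upwards [isOpen_ball.mem_nhds (mem_ball_self one_pos)] with lam hlam
      exact (hccEq k lam hlam).symm
    have h3 : HasDerivAt (fun lam : ℂ => cc k * lam) (cc k) 0 := by
      simpa using (hasDerivAt_id (0:ℂ)).const_mul (cc k)
    exact h2.unique h3
  -- the other entries of the corresponding row vanish
  have hrowzero : ∀ k l, l ≠ k → fderiv ℂ (fun z => G z (τ k)) 0 (Pi.single l 1) = 0 := by
    intro k l hlk
    set b := fderiv ℂ (fun z => G z (τ k)) 0 (Pi.single l 1) with hb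
    rcases eq_or_ne b 0 with h | h
    · exact h
    exfalso
    set u : ℂ := cc k * (‖b‖ : ℂ) / b with hu
    have hbn : ‖b‖ ≠ 0 := norm_ne_zero_iff.mpr h
    have hun : ‖u‖ = 1 := by
      rw [hu, norm_div, norm_mul, hcc1 k, Complex.norm_real, Real.norm_eq_abs,
        _root_.abs_of_nonneg (norm_nonneg b), one_mul, div_self hbn]
    set w : Fin n → ℂ := (Pi.single k 1 : Fin n → ℂ) + u • (Pi.single l 1 : Fin n → ℂ) with hw
    have hwle : ∀ j, ‖w j‖ ≤ 1 := by
      intro j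
      rcases eq_or_ne j k with rfl | hjk
      · simp [hw, Pi.single_apply, hlk.symm]
      rcases eq_or_ne j l with rfl | hjl
      · simp [hw, Pi.single_apply, hjk, hun]
      · simp [hw, Pi.single_apply, hjk, hjl]
    have hDw : fderiv ℂ (fun z => G z (τ k)) 0 w = cc k + u * b := by
      rw [hw, map_add, hDentry k, (fderiv ℂ (fun z => G z (τ k)) 0).map_smul, smul_eq_mul, hb]
    have hderiv0 : deriv (fun lam : ℂ => G (lam • w) (τ k)) 0 = cc k + u * b := by
      rw [(haxderiv w (τ k)).deriv, hDw]
    have hbound := Complex.norm_deriv_le_one_of_mapsTo_ball (haxdiff w hwle (τ k))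
      (by
        intro x hx
        rw [Metric.mem_closedBall]
        dsimp only
        rw [hax0 w (τ k)]
        exact le_of_lt (Metric.mem_ball.mp (haxmaps w hwle (τ k) hx))) one_pos
    rw [hderiv0] at hbound
    have hub : u * b = cc k * (‖b‖:ℂ) := by
      rw [hu, div_mul_cancel₀ _ h]
    have hval : ‖cc k + u * b‖ = 1 + ‖b‖ := by
      rw [hub, show cc k + cc k * (‖b‖:ℂ) = cc k * (1 + (‖b‖:ℂ)) by ring]
      rw [norm_mul]
      have h1 : ‖cc k‖ = 1 := by exact hcc1 k
      have h2 : ‖1 + (‖b‖:ℂ)‖ = 1 + ‖b‖ := by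
        rw [show (1:ℂ) + (‖b‖:ℂ) = ((1 + ‖b‖ : ℝ) : ℂ) by push_cast; ring,
          Complex.norm_real, Real.norm_eq_abs, _root_.abs_of_nonneg (by positivity)]
      rw [h1, h2, one_mul]
    rw [hval] at hbound
    have : ‖b‖ ≤ 0 := by linarith
    exact hbn (le_antisymm this (norm_nonneg b))
  -- injectivity of the coordinate assignment
  have hτinj : Function.Injective τ := by
    intro k1 k2 h12
    by_contra hne
    have h1 : fderiv ℂ (fun z => G z (τ k1)) 0 (Pi.single k2 1 : Fin n → ℂ) = 0 :=
      hrowzero k1 k2 (Ne.symm hne)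
    have h2 := hDentry k2
    rw [h12] at h1
    have h3 := hcc1 k2
    rw [← h2, h1] at h3
    simp at h3
  have hτbij : Function.Bijective τ := Finite.injective_iff_bijective.mp hτinj
  -- the key pointwise identity at points with maximal k-th coordinate
  have hmax : ∀ y ∈ Bn, ∀ k : Fin n, y k ≠ 0 → (∀ l, ‖y l‖ ≤ ‖y k‖) →
      G y (τ k) = cc k * y k := by
    intro y hy k hyk hmaxl
    have hykpos : (0:ℝ) < ‖y k‖ := norm_pos_iff.mpr hyk
    set w : Fin n → ℂ := (y k)⁻¹ • y with hw
    have hwle : ∀ l, ‖w l‖ ≤ 1 := by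
      intro l
      rw [hw]
      have : ‖((y k)⁻¹ • y) l‖ = ‖y k‖⁻¹ * ‖y l‖ := by
        simp [Pi.smul_apply, smul_eq_mul, norm_mul, norm_inv]
      rw [this]
      calc ‖y k‖⁻¹ * ‖y l‖ ≤ ‖y k‖⁻¹ * ‖y k‖ :=
            mul_le_mul_of_nonneg_left (hmaxl l) (by positivity)
        _ = 1 := inv_mul_cancel₀ hykpos.ne'
    have hwk : w k = 1 := by
      rw [hw]
      simp [Pi.smul_apply, smul_eq_mul, inv_mul_cancel₀ hyk]
    have hsum : w = ∑ l, w l • (Pi.single l 1 : Fin n → ℂ) := by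
      ext mm
      rw [Finset.sum_apply]
      simp [Pi.single_apply]
    have hDw : fderiv ℂ (fun z => G z (τ k)) 0 w = cc k := by
      conv_lhs => rw [hsum]
      rw [map_sum]
      have hterm : ∀ l ∈ Finset.univ,
          fderiv ℂ (fun z => G z (τ k)) 0 (w l • (Pi.single l 1 : Fin n → ℂ))
            = if l = k then cc k else 0 := by
        intro l _
        rw [(fderiv ℂ (fun z => G z (τ k)) 0).map_smul, smul_eq_mul]
        rcases eq_or_ne l k with rfl | h
        · rw [hDentry, hwk, if_pos rfl, one_mul]
        · rw [hrowzero k l h, if_neg h, mul_zero]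
      rw [Finset.sum_congr rfl hterm]
      simp
    have hder := haxderiv w (τ k)
    have hnd : ‖deriv (fun lam : ℂ => G (lam • w) (τ k)) 0‖ = 1 := by
      rw [hder.deriv, hDw]
      exact hcc1 k
    have heqn := schwarz_deriv_eq (haxdiff w hwle (τ k)) (haxmaps w hwle (τ k))
      (hax0 w (τ k)) hnd
    have hykball : y k ∈ Metric.ball (0:ℂ) 1 := mem_ball_zero_iff.mpr (hco hy k)
    have hval := heqn hykball
    simp only at hval
    rw [hder.deriv, hDw] at hval
    have hyw : (y k) • w = y := by
      rw [hw, smul_smul, mul_inv_cancel₀ hyk, one_smul]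
    rw [hyw] at hval
    exact hval
  -- the key identity everywhere, via the identity theorem in one variable
  have hkey : ∀ z ∈ Bn, ∀ k : Fin n, G z (τ k) = cc k * z k := by
    intro z hz k
    set F : ℂ → ℂ := fun ζ => G (Function.update z k ζ) (τ k) - cc k * ζ with hF
    have hupd_mem : ∀ ζ ∈ Metric.ball (0:ℂ) 1, Function.update z k ζ ∈ Bn := by
      intro ζ hζ
      refine hco' fun l => ?_
      rcases eq_or_ne l k with rfl | h
      · rw [Function.update_self]
        exact mem_ball_zero_iff.mp hζ
      · rw [Function.update_of_ne h]
        exact hco hz l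
    have hupdiff : DifferentiableOn ℂ (fun ζ : ℂ => Function.update z k ζ)
        (Metric.ball 0 1) := by
      apply differentiableOn_pi.mpr
      intro l
      rcases eq_or_ne l k with rfl | h
      · simp only [Function.update_self]
        exact differentiableOn_id
      · simp only [Function.update_of_ne h]
        exact differentiableOn_const (z l)
    have hFdiff : DifferentiableOn ℂ F (Metric.ball 0 1) := by
      apply DifferentiableOn.sub
      · exact (hGdiffj (τ k)).comp hupdiff (fun ζ hζ => hupd_mem ζ hζ)
      · exact ((differentiable_const (cc k)).mul differentiable_id).differentiableOn
    have hFanal : AnalyticOnNhd ℂ F (Metric.ball 0 1) := hFdiff.analyticOnNhd isOpen_ball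
    have hm0 : (0:ℝ) ≤ ‖z‖ := norm_nonneg z
    have hm1 : ‖z‖ < 1 := mem_ball_zero_iff.mp hz
    have hvanish : ∀ ζ : ℂ, ‖z‖ < ‖ζ‖ → ‖ζ‖ < 1 → F ζ = 0 := by
      intro ζ h1 h2
      have hyB : Function.update z k ζ ∈ Bn := hupd_mem ζ (mem_ball_zero_iff.mpr h2)
      have hζ0 : ζ ≠ 0 := by
        intro h0
        rw [h0, norm_zero] at h1
        linarith
      have hyk : Function.update z k ζ k ≠ 0 := by
        rw [Function.update_self]
        exact hζ0
      have hmaxl : ∀ l, ‖Function.update z k ζ l‖ ≤ ‖Function.update z k ζ k‖ := by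
        intro l
        rw [Function.update_self]
        rcases eq_or_ne l k with rfl | h
        · rw [Function.update_self]
        · rw [Function.update_of_ne h]
          calc ‖z l‖ ≤ ‖z‖ := norm_le_pi_norm z l
            _ ≤ ‖ζ‖ := le_of_lt h1
      have hGv := hmax _ hyB k hyk hmaxl
      rw [Function.update_self] at hGv
      rw [hF]
      simp only
      rw [hGv, sub_self]
    set ζ0 : ℂ := (((‖z‖+1)/2 : ℝ) : ℂ) with hζ0
    have hζ0n : ‖ζ0‖ = (‖z‖+1)/2 := by
      rw [hζ0, Complex.norm_real, Real.norm_eq_abs, _root_.abs_of_nonneg (by linarith)]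
    have hζ0mem : ζ0 ∈ Metric.ball (0:ℂ) 1 := by
      rw [mem_ball_zero_iff, hζ0n]
      linarith
    have hev : F =ᶠ[nhds ζ0] 0 := by
      have hopen : IsOpen {ζ : ℂ | ‖z‖ < ‖ζ‖ ∧ ‖ζ‖ < 1} :=
        (isOpen_lt continuous_const continuous_norm).and
          (isOpen_lt continuous_norm continuous_const)
      filter_upwards [hopen.mem_nhds ⟨by rw [hζ0n]; linarith, by rw [hζ0n]; linarith⟩] with ζ hζ
      exact hvanish ζ hζ.1 hζ.2
    have hEqOn := hFanal.eqOn_zero_of_preconnected_of_eventuallyEq_zero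
      (convex_ball (0:ℂ) 1).isPreconnected hζ0mem hev
    have hzk : z k ∈ Metric.ball (0:ℂ) 1 := mem_ball_zero_iff.mpr (hco hz k)
    have hFzk := hEqOn hzk
    rw [hF] at hFzk
    simp only [Function.update_eq_self, Pi.zero_apply] at hFzk
    exact sub_eq_zero.mp hFzk
  -- assembly
  set τe : Equiv.Perm (Fin n) := Equiv.ofBijective τ hτbij with hτe
  refine ⟨τe.symm, fun j ζ => pdMobius (-(f 0 j)) (cc (τe.symm j) * ζ), ?_, ?_⟩
  · intro j
    have hcn : ‖cc (τe.symm j)‖ = 1 := hcc1 _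
    have hc0 : cc (τe.symm j) ≠ 0 := by
      intro h
      rw [h, norm_zero] at hcn
      norm_num at hcn
    have hmulmem : ∀ ζ ∈ Metric.ball (0:ℂ) 1, ‖cc (τe.symm j) * ζ‖ < 1 := by
      intro ζ hζ
      rw [norm_mul, hcn, one_mul]
      exact mem_ball_zero_iff.mp hζ
    have hφdiff : DifferentiableOn ℂ (fun ζ => pdMobius (-(f 0 j)) (cc (τe.symm j) * ζ))
        (Metric.ball 0 1) := by
      refine (pdMobius_diffOn (by simpa using haj j)).comp
        (((differentiable_const (cc (τe.symm j))).mul differentiable_id).differentiableOn)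
        (fun ζ hζ => mem_ball_zero_iff.mpr (hmulmem ζ hζ))
    have hφmaps : Set.MapsTo (fun ζ => pdMobius (-(f 0 j)) (cc (τe.symm j) * ζ))
        (Metric.ball 0 1) (Metric.ball 0 1) := by
      intro ζ hζ
      exact mem_ball_zero_iff.mpr (pdMobius_mem (by simpa using haj j) (hmulmem ζ hζ))
    have hψdiff : DifferentiableOn ℂ (fun v => (cc (τe.symm j))⁻¹ * pdMobius (f 0 j) v)
        (Metric.ball 0 1) :=
      (pdMobius_diffOn (haj j)).const_mul _
    have hψmaps : Set.MapsTo (fun v => (cc (τe.symm j))⁻¹ * pdMobius (f 0 j) v)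
        (Metric.ball 0 1) (Metric.ball 0 1) := by
      intro v hv
      rw [mem_ball_zero_iff, norm_mul, norm_inv, hcn, inv_one, one_mul]
      exact pdMobius_mem (haj j) (mem_ball_zero_iff.mp hv)
    have hleft : ∀ ζ ∈ Metric.ball (0:ℂ) 1,
        (cc (τe.symm j))⁻¹ * pdMobius (f 0 j) (pdMobius (-(f 0 j)) (cc (τe.symm j) * ζ)) = ζ := by
      intro ζ hζ
      have h2 : pdMobius (-(-(f 0 j))) (pdMobius (-(f 0 j)) (cc (τe.symm j) * ζ))
          = cc (τe.symm j) * ζ :=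
        pdMobius_left_inv (by simpa using haj j) (hmulmem ζ hζ)
      rw [neg_neg] at h2
      rw [h2, inv_mul_cancel_left₀ hc0]
    have hright : ∀ v ∈ Metric.ball (0:ℂ) 1,
        pdMobius (-(f 0 j)) (cc (τe.symm j) * ((cc (τe.symm j))⁻¹ * pdMobius (f 0 j) v)) = v := by
      intro v hv
      rw [mul_inv_cancel_left₀ hc0]
      exact pdMobius_left_inv (haj j) (mem_ball_zero_iff.mp hv)
    have hInv : Set.InvOn (fun v => (cc (τe.symm j))⁻¹ * pdMobius (f 0 j) v)
        (fun ζ => pdMobius (-(f 0 j)) (cc (τe.symm j) * ζ))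
        (Metric.ball 0 1) (Metric.ball 0 1) :=
      ⟨fun ζ hζ => hleft ζ hζ, fun v hv => hright v hv⟩
    exact ⟨hφdiff, hInv.bijOn hφmaps hψmaps,
      ⟨_, hψdiff, hInv⟩⟩
  · intro z hz
    funext j
    have hτk : τ (τe.symm j) = j := τe.apply_symm_apply j
    have hk := hkey z hz (τe.symm j)
    rw [hτk] at hk
    have h2 : pdMobius (-(f 0 j)) (G z j) = f z j := by
      have := pdMobius_left_inv (haj j) (hco (hbij.mapsTo hz) j)
      simpa [hGdef] using this
    show f z j = pdMobius (-(f 0 j)) (cc (τe.symm j) * z (τe.symm j))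
    rw [← hk, ← h2]
end
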